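/- Let A ∈ ℝ^{n×n} be symmetric positive semidefinite and 1 ≤ r < n. Then Σ_{J} det(A(J,J)) · ‖A − A_J‖_* = (r+1) · Σ_{|Ĵ|=r+1} det(A(Ĵ,Ĵ)), where the left-hand sum ranges over all index sets J ⊆ {1,…,n} with |J| = r and A(J,J) invertible, and the right-hand sum ranges over all index sets Ĵ ⊆ {1,…,n} with |Ĵ| = r+1. -/

import Mathlib

open Matrix Finset

/-- Cross approximation `A_J = A(:,J) A(J,J)⁻¹ A(J,:)` built on the principal submatrix
indexed by the finite index set `J`. -/
noncomputable def crossApprox {n : ℕ} (A : Matrix (Fin n) (Fin n) ℝ) (J : Finset (Fin n)) :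
    Matrix (Fin n) (Fin n) ℝ :=
  A.submatrix id (Subtype.val : J → Fin n) *
    (A.submatrix (Subtype.val : J → Fin n) (Subtype.val : J → Fin n))⁻¹ *
    A.submatrix (Subtype.val : J → Fin n) id

/-- Determinant of the principal submatrix `A(J,J)`. -/
noncomputable def pminor {n : ℕ} (A : Matrix (Fin n) (Fin n) ℝ) (J : Finset (Fin n)) : ℝ :=
  (A.submatrix (Subtype.val : J → Fin n) (Subtype.val : J → Fin n)).det

/-- Nuclear norm: sum of the singular values of `M`, i.e. of the square roots of the
eigenvalues of `Mᴴ M`. -/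
noncomputable def nuclearNorm {n : ℕ} (M : Matrix (Fin n) (Fin n) ℝ) : ℝ :=
  ∑ i, Real.sqrt ((Matrix.isHermitian_conjTranspose_mul_self M).eigenvalues i)

/-- Frobenius norm. -/
noncomputable def frobNorm {n : ℕ} (M : Matrix (Fin n) (Fin n) ℝ) : ℝ :=
  Real.sqrt (∑ i, ∑ j, (M i j) ^ 2)

/-- Spectral norm: the largest singular value. -/
noncomputable def specNorm {n : ℕ} (M : Matrix (Fin n) (Fin n) ℝ) : ℝ :=
  ⨆ i, Real.sqrt ((Matrix.isHermitian_conjTranspose_mul_self M).eigenvalues i)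

/-- Max norm: largest magnitude of an entry. -/
noncomputable def maxNorm {n : ℕ} (M : Matrix (Fin n) (Fin n) ℝ) : ℝ :=
  ⨆ i, ⨆ j, |M i j|

/-- The tuple `f` sorted in nonincreasing order. -/
noncomputable def sortedDesc {m : ℕ} (f : Fin m → ℝ) : Fin m → ℝ :=
  fun i => -(((fun j => -f j) ∘ Tuple.sort fun j => -f j) i)

/-- `Esum M k` is the sum of all `k × k` principal minors of `M`. -/
noncomputable def Esum {n : ℕ} (M : Matrix (Fin n) (Fin n) ℝ) (k : ℕ) : ℝ :=
  ∑ K ∈ Finset.powersetCard k (Finset.univ : Finset (Fin n)), pminor M K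

/-!
`A - A_J` is the Schur complement of `A(J,J)` in the positive semidefinite block matrix
`[[A(J,J), A(J,:)], [A(:,J), A]]`, so it is positive semidefinite and its nuclear norm is its
trace. Its diagonal vanishes on `J`, and for `i ∉ J` the Schur determinant formula gives
`det A(J ∪ {i}) = det A(J,J) · (A - A_J)ᵢᵢ`. Hence `det A(J,J) ‖A - A_J‖_* = ∑_{i ∉ J} det A(J ∪ {i})`,
which also holds when `det A(J,J) = 0`, because then every principal minor containing `J`
vanishes. Summing over `|J| = r` counts every `(r+1)`-subset `r+1` times.
-/

theorem Finset.sum_powersetCard_sum_insert {α M : Type*} [DecidableEq α] [AddCommMonoid M]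
    (s : Finset α) (r : ℕ) (f : Finset α → M) :
    ∑ J ∈ powersetCard r s, ∑ i ∈ s \ J, f (insert i J) =
      (r + 1) • ∑ K ∈ powersetCard (r + 1) s, f K := by
  have hpairs : ∑ J ∈ powersetCard r s, ∑ i ∈ s \ J, f (insert i J) =
      ∑ K ∈ powersetCard (r + 1) s, ∑ _i ∈ K, f K := by
    rw [sum_sigma', sum_sigma']
    refine sum_nbij' (fun p => ⟨insert p.2 p.1, p.2⟩) (fun q => ⟨q.1.erase q.2, q.2⟩)
      ?_ ?_ ?_ ?_ fun _ _ => rfl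
    all_goals
      rintro ⟨J, i⟩ h
      simp only [mem_sigma, mem_powersetCard, mem_sdiff] at h ⊢
    · grind
    · grind
    · simp [erase_insert h.2.2]
    · simp [insert_erase h.2]
  rw [hpairs, smul_sum]
  refine sum_congr rfl fun K hK => ?_
  rw [sum_const, (mem_powersetCard.mp hK).2]

theorem Matrix.IsHermitian.trace_cfc {ι 𝕜 : Type*} [Fintype ι] [DecidableEq ι] [RCLike 𝕜]
    {B : Matrix ι ι 𝕜} (hB : B.IsHermitian) (f : ℝ → ℝ) :
    (cfc f B).trace = ∑ i, (f (hB.eigenvalues i) : 𝕜) := by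
  rw [hB.cfc_eq, IsHermitian.cfc, Unitary.conjStarAlgAut_apply, trace_mul_cycle,
    Unitary.coe_star_mul_self, one_mul, trace_diagonal]
  rfl

open scoped MatrixOrder in
theorem nuclearNorm_eq_trace {m : ℕ} {M : Matrix (Fin m) (Fin m) ℝ} (hM : M.PosSemidef) :
    nuclearNorm M = M.trace := by
  have hsqrt : cfc Real.sqrt (Mᴴ * M) = M := by
    rw [← cfcₙ_eq_cfc, ← CFC.sqrt_eq_real_sqrt (Mᴴ * M) (star_mul_self_nonneg M),
      hM.isHermitian.eq, CFC.sqrt_mul_self M hM.nonneg]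
  have htrace := (isHermitian_conjTranspose_mul_self M).trace_cfc Real.sqrt
  rw [hsqrt] at htrace
  exact htrace.symm

section PrincipalMinors

variable {n : ℕ} {A : Matrix (Fin n) (Fin n) ℝ} {J : Finset (Fin n)}

theorem Matrix.PosSemidef.posDef_of_pminor_ne_zero (hA : A.PosSemidef) (hJ : pminor A J ≠ 0) :
    (A.submatrix (Subtype.val : J → Fin n) (Subtype.val : J → Fin n)).PosDef :=
  (hA.submatrix _).posDef_iff_det_ne_zero.mpr hJ

theorem Matrix.PosSemidef.pminor_eq_zero_of_subset (hA : A.PosSemidef) {K : Finset (Fin n)}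
    (hJK : J ⊆ K) (hJ : pminor A J = 0) : pminor A K = 0 := by
  by_contra hK
  let incl : J → K := fun j => ⟨j, hJK j.2⟩
  have hincl : Function.Injective incl := fun _ _ h => Subtype.ext (congrArg Subtype.val h :)
  exact ((hA.posDef_of_pminor_ne_zero hK).submatrix hincl).det_pos.ne' hJ

theorem Matrix.PosSemidef.sub_crossApprox (hA : A.PosSemidef) (hJ : pminor A J ≠ 0) :
    (A - crossApprox A J).PosSemidef := by
  have hC := hA.posDef_of_pminor_ne_zero hJ
  have := hC.isUnit.invertible
  have hB : (A.submatrix (Subtype.val : J → Fin n) id)ᴴ = A.submatrix id Subtype.val := by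
    rw [conjTranspose_submatrix, hA.isHermitian.eq]
  have hblock : (fromBlocks (A.submatrix (Subtype.val : J → Fin n) (Subtype.val : J → Fin n))
      (A.submatrix Subtype.val id) (A.submatrix Subtype.val id)ᴴ A).PosSemidef := by
    rw [hB]
    convert hA.submatrix (Sum.elim (Subtype.val : J → Fin n) id)
    ext (i | i) (j | j) <;> rfl
  rw [PosDef.fromBlocks₁₁ _ _ hC, hB] at hblock
  exact hblock

theorem crossApprox_apply_of_mem (hJ : pminor A J ≠ 0) {i : Fin n} (hi : i ∈ J) (j : Fin n) :
    crossApprox A J i j = A i j := by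
  set C := A.submatrix (Subtype.val : J → Fin n) (Subtype.val : J → Fin n)
  change (C * C⁻¹ * A.submatrix (Subtype.val : J → Fin n) id) ⟨i, hi⟩ j = A i j
  rw [mul_nonsing_inv C hJ.isUnit, Matrix.one_mul]
  rfl

theorem pminor_insert (hJ : pminor A J ≠ 0) {i : Fin n} (hi : i ∉ J) :
    pminor A (insert i J) = pminor A J * (A - crossApprox A J) i i := by
  have := invertibleOfIsUnitDet _ hJ.isUnit
  let e := (Finset.subtypeInsertEquivOption hi).trans (Equiv.optionEquivSumPUnit.{0} J)
  have hblock : (A.submatrix (Subtype.val : {x // x ∈ insert i J} → Fin n)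
      Subtype.val).submatrix e.symm e.symm =
      fromBlocks (A.submatrix Subtype.val Subtype.val) (of fun j _ => A j.1 i)
        (of fun _ j => A i j.1) (of fun _ _ => A i i) := by
    ext (j | _) (k | _) <;> rfl
  rw [pminor, ← det_submatrix_equiv_self e.symm, hblock, det_fromBlocks₁₁,
    det_unique (n := PUnit), invOf_eq_nonsing_inv]
  rfl

theorem Matrix.PosSemidef.pminor_mul_nuclearNorm_sub_crossApprox (hA : A.PosSemidef)
    (J : Finset (Fin n)) :
    pminor A J * nuclearNorm (A - crossApprox A J) = ∑ i ∈ Jᶜ, pminor A (insert i J) := by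
  by_cases hJ : pminor A J = 0
  · rw [hJ, zero_mul]
    exact (sum_eq_zero fun i _ => hA.pminor_eq_zero_of_subset (subset_insert i J) hJ).symm
  have hdiag : ∀ i ∈ J, (A - crossApprox A J).diag i = 0 := fun i hi => by
    rw [diag_apply, sub_apply, crossApprox_apply_of_mem hJ hi, sub_self]
  rw [nuclearNorm_eq_trace (hA.sub_crossApprox hJ), trace, ← sum_add_sum_compl J,
    sum_eq_zero hdiag, zero_add, mul_sum]
  exact sum_congr rfl fun i hi => (pminor_insert hJ (mem_compl.mp hi)).symm

end PrincipalMinors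

open scoped Classical in
theorem sum_det_mul_nuclear_eq_general {n r : ℕ}
    (A : Matrix (Fin n) (Fin n) ℝ) (hA : A.PosSemidef) :
    ∑ J ∈ Finset.univ.filter (fun J : Finset (Fin n) => J.card = r ∧ pminor A J ≠ 0),
        pminor A J * nuclearNorm (A - crossApprox A J) =
      (r + 1 : ℝ) *
        ∑ K ∈ Finset.powersetCard (r + 1) (Finset.univ : Finset (Fin n)), pminor A K := by
  have hslice : univ.filter (fun J : Finset (Fin n) => J.card = r) = powersetCard r univ := by
    ext; simp
  rw [← filter_filter, hslice, sum_filter_of_ne fun J _ h => left_ne_zero_of_mul h]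
  simp_rw [hA.pminor_mul_nuclearNorm_sub_crossApprox, compl_eq_univ_sdiff]
  rw [sum_powersetCard_sum_insert, nsmul_eq_mul, Nat.cast_succ]

open scoped Classical in
/-- For `A` SPSD and `1 ≤ r < n`,
`∑_{|J| = r, A(J,J) invertible} det A(J,J) ‖A - A_J‖_* = (r+1) ∑_{|Ĵ| = r+1} det A(Ĵ,Ĵ)`. -/
theorem sum_det_mul_nuclear_eq {n r : ℕ}
    (A : Matrix (Fin n) (Fin n) ℝ) (hA : A.PosSemidef) (hr : 1 ≤ r) (hrn : r < n) :
    ∑ J ∈ Finset.univ.filter (fun J : Finset (Fin n) => J.card = r ∧ pminor A J ≠ 0),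
        pminor A J * nuclearNorm (A - crossApprox A J) =
      (r + 1 : ℝ) *
        ∑ K ∈ Finset.powersetCard (r + 1) (Finset.univ : Finset (Fin n)), pminor A K :=
  sum_det_mul_nuclear_eq_general A hA
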